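/- Let c be a pseudo-metric on X ∪ {−}, where X is a finite alphabet. Then for all trees x̄, ȳ over X, the mapping distance D_c(x̄, ȳ) (the quantity computed by the dynamic programming scheme of Zhang and Shasha) equals the tree edit distance d_c(x̄, ȳ). -/

import Mathlib

/-!
Work with forests and pre-order indices in `ℕ`. Writing the cost of a mapping as the cost of
deleting all of `x̄` and inserting all of `ȳ`, corrected by `c(a, b) - c(a, −) - c(−, b)` for each
matched pair, makes it additive in the mapping.

A mapping gives an edit script of the same cost, for any cost function: delete an unmatched
root of the first forest, or insert an unmatched root of the second, or else the two roots are
matched to each other, and then the rest of the mapping splits into one between their children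
and one between the remaining trees.

Conversely, replaying a script backwards from the identity mapping, every edit turns a mapping
for the rest of the script into one for the whole that costs at most the edit more: a deletion
only shifts indices, a replacement keeps the mapping, and an insertion forgets the pair at the
inserted node; the triangle inequality pays for the last two.
-/

/-- A rooted ordered tree with labels from `X`. -/
inductive PTree (X : Type) : Type where
  | node : X → List (PTree X) → PTree X

namespace PTree

variable {X : Type}

mutual
  /-- The labels of a tree in pre-order. -/
  def preorder : PTree X → List X
    | .node l cs => l :: preorderF cs
  /-- The labels of a forest in pre-order. -/
  def preorderF : List (PTree X) → List X
    | [] => []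
    | t :: ts => preorder t ++ preorderF ts
end

/-- The size of a tree (number of nodes). -/
def size (t : PTree X) : ℕ := (preorder t).length

/-- `Deletes f g l` holds iff the forest `g` is obtained from the forest `f` by
deleting one node labeled `l`, attaching its children in its place. -/
inductive Deletes : List (PTree X) → List (PTree X) → X → Prop where
  | here (l : X) (cs rest : List (PTree X)) :
      Deletes (.node l cs :: rest) (cs ++ rest) l
  | child {cs cs' : List (PTree X)} {l : X} (z : X) (rest : List (PTree X)) :
      Deletes cs cs' l → Deletes (.node z cs :: rest) (.node z cs' :: rest) l
  | skip {rest rest' : List (PTree X)} {l : X} (t : PTree X) :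
      Deletes rest rest' l → Deletes (t :: rest) (t :: rest') l

/-- `Replaces f g l l'` holds iff the forest `g` is obtained from the forest `f` by
changing the label `l` of one node into `l'`. -/
inductive Replaces : List (PTree X) → List (PTree X) → X → X → Prop where
  | here (l l' : X) (cs rest : List (PTree X)) :
      Replaces (.node l cs :: rest) (.node l' cs :: rest) l l'
  | child {cs cs' : List (PTree X)} {l l' : X} (z : X) (rest : List (PTree X)) :
      Replaces cs cs' l l' → Replaces (.node z cs :: rest) (.node z cs' :: rest) l l'
  | skip {rest rest' : List (PTree X)} {l l' : X} (t : PTree X) :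
      Replaces rest rest' l l' → Replaces (t :: rest) (t :: rest') l l'

/-- `EditStep c f g r` holds iff one tree edit (a deletion, an insertion, or a
replacement) of cost `r` under the cost function `c` transforms the forest `f`
into the forest `g`. The gap symbol `−` is represented by `none`:
deleting label `l` costs `c (some l) none`, inserting label `l` costs
`c none (some l)`, and replacing label `l` by `l'` costs `c (some l) (some l')`.
An insertion is exactly the inverse of a deletion (the inserted node may adopt
a consecutive run of existing siblings as children). -/
inductive EditStep (c : Option X → Option X → ℝ) :
    List (PTree X) → List (PTree X) → ℝ → Prop where
  | del {f g : List (PTree X)} {l : X} :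
      Deletes f g l → EditStep c f g (c (some l) none)
  | ins {f g : List (PTree X)} {l : X} :
      Deletes g f l → EditStep c f g (c none (some l))
  | rep {f g : List (PTree X)} {l l' : X} :
      Replaces f g l l' → EditStep c f g (c (some l) (some l'))

/-- `Script c f g r` holds iff some edit script (finite sequence of edits) of
total cost `r` under the cost function `c` transforms the forest `f` into the
forest `g`. -/
inductive Script (c : Option X → Option X → ℝ) :
    List (PTree X) → List (PTree X) → ℝ → Prop where
  | nil (f : List (PTree X)) : Script c f f 0
  | cons {f g h : List (PTree X)} {r s : ℝ} :
      EditStep c f g r → Script c g h s → Script c f h (r + s)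

/-- The tree edit distance `d_c`: the infimum of the costs of all edit scripts
transforming the tree `x` into the tree `y`. -/
noncomputable def editDist (c : Option X → Option X → ℝ) (x y : PTree X) : ℝ :=
  sInf {r : ℝ | Script c [x] [y] r}

mutual
  /-- In pre-order: for every node of the tree, the size of the subtree rooted
  at that node. -/
  def subtreeSizes : PTree X → List ℕ
    | .node l cs => size (.node l cs) :: subtreeSizesF cs
  /-- In pre-order: for every node of the forest, the size of the subtree rooted
  at that node. -/
  def subtreeSizesF : List (PTree X) → List ℕ
    | [] => []
    | t :: ts => subtreeSizes t ++ subtreeSizesF ts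
end

/-- The label of the `i`-th node of `t` in pre-order (`0`-based). -/
def label (t : PTree X) (i : Fin (size t)) : X := (preorder t).get i

/-- The `i`-th node of `t` (in `0`-based pre-order) is an ancestor of the
`j`-th node, characterized via pre-order indices and subtree sizes. -/
def IsAncestor (t : PTree X) (i j : ℕ) : Prop :=
  i < j ∧ j < i + (subtreeSizes t).getD i 0

/-- A tree mapping between `x` and `y`: a set of pairs of (`0`-based pre-order)
node indices such that every index occurs in at most one pair, the mapping is
order-preserving, and it is ancestor-preserving. -/
def IsTreeMapping (x y : PTree X) (M : Finset (Fin (size x) × Fin (size y))) : Prop :=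
  ∀ p ∈ M, ∀ q ∈ M,
    (p.1 = q.1 ↔ p.2 = q.2) ∧ (p.1 < q.1 ↔ p.2 < q.2) ∧
    (IsAncestor x ↑p.1 ↑q.1 ↔ IsAncestor y ↑p.2 ↑q.2)

/-- The cost of a tree mapping `M` under the cost function `c`: matched pairs
of nodes pay the replacement cost, unmatched nodes of `x` pay the deletion
cost, unmatched nodes of `y` pay the insertion cost. -/
def mappingCost (c : Option X → Option X → ℝ) (x y : PTree X)
    (M : Finset (Fin (size x) × Fin (size y))) : ℝ :=
  (∑ p ∈ M, c (some (label x p.1)) (some (label y p.2)))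
    + (∑ i ∈ Finset.univ.filter (fun i : Fin (size x) => ∀ p ∈ M, p.1 ≠ i),
        c (some (label x i)) none)
    + (∑ j ∈ Finset.univ.filter (fun j : Fin (size y) => ∀ p ∈ M, p.2 ≠ j),
        c none (some (label y j)))

/-- The mapping distance `D_c` (the quantity computed by the dynamic
programming scheme of Zhang and Shasha): the minimal cost of a tree mapping
between `x` and `y`. -/
noncomputable def mapDist (c : Option X → Option X → ℝ) (x y : PTree X) : ℝ :=
  sInf {r : ℝ | ∃ M, IsTreeMapping x y M ∧ mappingCost c x y M = r}

end PTree

/-- A pseudo-metric on a type `S`: non-negative, symmetric, zero on the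
diagonal, and satisfying the triangle inequality. -/
def IsPseudoMetric {S : Type} (c : S → S → ℝ) : Prop :=
  (∀ a b, 0 ≤ c a b) ∧ (∀ a b, c a b = c b a) ∧ (∀ a, c a a = 0) ∧
    (∀ a b d, c a d ≤ c a b + c b d)

namespace PTree

variable {X : Type}

section Forest

@[simp] lemma preorder_node (a : X) (cs : List (PTree X)) :
    preorder (.node a cs) = a :: preorderF cs := by
  rw [preorder]

@[simp] lemma preorderF_nil : preorderF ([] : List (PTree X)) = [] := by
  rw [preorderF]

@[simp] lemma preorderF_cons (t : PTree X) (ts : List (PTree X)) :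
    preorderF (t :: ts) = preorder t ++ preorderF ts := by
  rw [preorderF]

@[simp] lemma preorderF_append (u v : List (PTree X)) :
    preorderF (u ++ v) = preorderF u ++ preorderF v := by
  induction u with
  | nil => simp
  | cons t ts ih => simp [ih]

@[simp] lemma subtreeSizes_node (a : X) (cs : List (PTree X)) :
    subtreeSizes (.node a cs) = size (.node a cs) :: subtreeSizesF cs := by
  rw [subtreeSizes]

@[simp] lemma subtreeSizesF_nil : subtreeSizesF ([] : List (PTree X)) = [] := by
  rw [subtreeSizesF]

@[simp] lemma subtreeSizesF_cons (t : PTree X) (ts : List (PTree X)) :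
    subtreeSizesF (t :: ts) = subtreeSizes t ++ subtreeSizesF ts := by
  rw [subtreeSizesF]

@[simp] lemma subtreeSizesF_append (u v : List (PTree X)) :
    subtreeSizesF (u ++ v) = subtreeSizesF u ++ subtreeSizesF v := by
  induction u with
  | nil => simp
  | cons t ts ih => simp [ih]

def sizeF (f : List (PTree X)) : ℕ := (preorderF f).length

def labelF (f : List (PTree X)) (i : ℕ) : Option X := (preorderF f)[i]?

def IsAncestorF (f : List (PTree X)) (i j : ℕ) : Prop :=
  i < j ∧ j < i + (subtreeSizesF f).getD i 0

@[simp] lemma sizeF_nil : sizeF ([] : List (PTree X)) = 0 := by simp [sizeF]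

@[simp] lemma sizeF_append (u v : List (PTree X)) : sizeF (u ++ v) = sizeF u + sizeF v := by
  simp [sizeF]

@[simp] lemma sizeF_cons (t : PTree X) (ts : List (PTree X)) :
    sizeF (t :: ts) = size t + sizeF ts := by
  simp [sizeF, size]

@[simp] lemma size_node (a : X) (cs : List (PTree X)) : size (.node a cs) = sizeF cs + 1 := by
  simp [size, sizeF]

lemma sizeF_node_cons (a : X) (cs rest : List (PTree X)) :
    sizeF (.node a cs :: rest) = sizeF cs + sizeF rest + 1 := by
  rw [sizeF_cons, size_node]; omega

lemma preorderF_node_cons (a : X) (cs rest : List (PTree X)) :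
    preorderF (.node a cs :: rest) = a :: preorderF (cs ++ rest) := by
  simp

lemma subtreeSizesF_node_cons (a : X) (cs rest : List (PTree X)) :
    subtreeSizesF (.node a cs :: rest) = (sizeF cs + 1) :: subtreeSizesF (cs ++ rest) := by
  simp [size_node]

@[elab_as_elim]
theorem forest_induction {P : List (PTree X) → Prop} (nil : P [])
    (node_cons : ∀ a cs rest, P (cs ++ rest) → P (.node a cs :: rest)) :
    ∀ f, P f
  | [] => nil
  | .node a cs :: rest => node_cons a cs rest (forest_induction nil node_cons (cs ++ rest))
termination_by f => sizeF f
decreasing_by simp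

lemma length_subtreeSizesF (f : List (PTree X)) : (subtreeSizesF f).length = sizeF f := by
  induction f using forest_induction with
  | nil => simp
  | node_cons a cs rest ih =>
    rw [subtreeSizesF_node_cons, List.length_cons, ih, sizeF_append, sizeF_node_cons]

lemma add_subtreeSizesF_le (f : List (PTree X)) {i : ℕ} (hi : i < sizeF f) :
    i + (subtreeSizesF f).getD i 0 ≤ sizeF f := by
  induction f using forest_induction generalizing i with
  | nil => simp at hi
  | node_cons a cs rest ih =>
    rw [subtreeSizesF_node_cons]
    rcases i with _ | i
    · simp
    · simp only [sizeF_node_cons, List.getD_cons_succ] at hi ⊢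
      have := ih (i := i) (by rw [sizeF_append]; omega)
      rw [sizeF_append] at this
      omega

lemma labelF_append_left {u v : List (PTree X)} {i : ℕ} (hi : i < sizeF u) :
    labelF (u ++ v) i = labelF u i := by
  simp [labelF, List.getElem?_append_left (show i < (preorderF u).length from hi)]

lemma labelF_append_right (u v : List (PTree X)) (i : ℕ) :
    labelF (u ++ v) (sizeF u + i) = labelF v i := by
  simp [labelF, sizeF, List.getElem?_append_right]

@[simp] lemma labelF_node_cons_zero (a : X) (cs rest : List (PTree X)) :
    labelF (.node a cs :: rest) 0 = some a := by
  simp [labelF]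

@[simp] lemma labelF_node_cons_succ (a : X) (cs rest : List (PTree X)) (i : ℕ) :
    labelF (.node a cs :: rest) (i + 1) = labelF (cs ++ rest) i := by
  rw [labelF, preorderF_node_cons]; rfl

lemma lt_sizeF_of_labelF_eq_some {f : List (PTree X)} {i : ℕ} {a : X}
    (h : labelF f i = some a) : i < sizeF f :=
  (List.getElem?_eq_some_iff.mp h).1

lemma IsAncestorF.lt {f : List (PTree X)} {i j : ℕ} (h : IsAncestorF f i j) : i < j := h.1

lemma IsAncestorF.lt_sizeF {f : List (PTree X)} {i j : ℕ} (h : IsAncestorF f i j) :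
    j < sizeF f := by
  obtain ⟨hij, hj⟩ := h
  by_cases hi : i < sizeF f
  · have := add_subtreeSizesF_le f hi; omega
  · rw [List.getD_eq_default _ _ (by rw [length_subtreeSizesF]; omega)] at hj; omega

lemma isAncestorF_append_left {u v : List (PTree X)} {i : ℕ} (hi : i < sizeF u) (j : ℕ) :
    IsAncestorF (u ++ v) i j ↔ IsAncestorF u i j := by
  rw [IsAncestorF, IsAncestorF, subtreeSizesF_append,
    List.getD_append _ _ _ _ (by rwa [length_subtreeSizesF])]

lemma isAncestorF_append_right (u v : List (PTree X)) (i j : ℕ) :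
    IsAncestorF (u ++ v) (sizeF u + i) (sizeF u + j) ↔ IsAncestorF v i j := by
  rw [IsAncestorF, IsAncestorF, subtreeSizesF_append,
    List.getD_append_right _ _ _ _ (by rw [length_subtreeSizesF]; omega), length_subtreeSizesF]
  simp only [Nat.add_sub_cancel_left]
  omega

lemma isAncestorF_node_cons_zero (a : X) (cs rest : List (PTree X)) (j : ℕ) :
    IsAncestorF (.node a cs :: rest) 0 j ↔ 0 < j ∧ j ≤ sizeF cs := by
  rw [IsAncestorF, subtreeSizesF_node_cons]
  simp

lemma isAncestorF_node_cons_succ (a : X) (cs rest : List (PTree X)) (i j : ℕ) :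
    IsAncestorF (.node a cs :: rest) (i + 1) (j + 1) ↔ IsAncestorF (cs ++ rest) i j := by
  simp only [IsAncestorF, subtreeSizesF_node_cons, List.getD_cons_succ]; omega

end Forest

section Embedding

structure IsForestEmbedding (f g : List (PTree X)) (e : ℕ → ℕ) : Prop where
  strictMono : StrictMono e
  lt_sizeF : ∀ i < sizeF f, e i < sizeF g
  labelF_apply : ∀ i < sizeF f, labelF g (e i) = labelF f i
  isAncestorF_apply :
    ∀ i < sizeF f, ∀ j < sizeF f, IsAncestorF g (e i) (e j) ↔ IsAncestorF f i j

namespace IsForestEmbedding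

variable {f g u u' v v' : List (PTree X)} {e e₁ e₂ : ℕ → ℕ}

lemma congr (h : IsForestEmbedding f g e) {e' : ℕ → ℕ} (he : ∀ i, e i = e' i) :
    IsForestEmbedding f g e' :=
  funext he ▸ h

lemma refl (f : List (PTree X)) : IsForestEmbedding f f id :=
  ⟨strictMono_id, fun _ hi => hi, fun _ _ => rfl, fun _ _ _ _ => Iff.rfl⟩

lemma nil (g : List (PTree X)) : IsForestEmbedding [] g id :=
  ⟨strictMono_id, by simp, by simp, by simp⟩

lemma node_cons (a : X) (cs rest : List (PTree X)) :
    IsForestEmbedding (cs ++ rest) (.node a cs :: rest) (· + 1) :=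
  ⟨strictMono_id.add_const 1, fun i hi => by rw [sizeF_node_cons]; rw [sizeF_append] at hi; omega,
    fun i _ => labelF_node_cons_succ a cs rest i,
    fun i _ j _ => isAncestorF_node_cons_succ a cs rest i j⟩

lemma append (h₁ : IsForestEmbedding u u' e₁) (h₂ : IsForestEmbedding v v' e₂) :
    IsForestEmbedding (u ++ v) (u' ++ v')
      (fun i => if i < sizeF u then e₁ i else sizeF u' + e₂ (i - sizeF u)) := by
  have split : ∀ i, i < sizeF u ∨ ∃ k, i = sizeF u + k := fun i =>
    (lt_or_ge i (sizeF u)).imp_right fun hi => ⟨i - sizeF u, by omega⟩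
  refine ⟨fun i j hij => ?_, fun i hi => ?_, fun i hi => ?_, fun i hi j hj => ?_⟩
  · rcases split i with hi | ⟨i, rfl⟩ <;> rcases split j with hj | ⟨j, rfl⟩
    · simpa [hi, hj] using h₁.strictMono hij
    · simpa [hi] using (h₁.lt_sizeF i hi).trans_le (Nat.le_add_right _ _)
    · omega
    · simpa using h₂.strictMono (show i < j by omega)
  · rw [sizeF_append] at hi ⊢
    rcases split i with hi' | ⟨i, rfl⟩
    · simpa [hi'] using (h₁.lt_sizeF i hi').trans_le (Nat.le_add_right _ _)
    · simpa using h₂.lt_sizeF i (by omega)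
  · rcases split i with hi' | ⟨i, rfl⟩
    · simp only [hi', if_true]
      rw [labelF_append_left (h₁.lt_sizeF i hi'), labelF_append_left hi', h₁.labelF_apply i hi']
    · simp only [add_lt_iff_neg_left, not_lt_zero, if_false, Nat.add_sub_cancel_left,
        labelF_append_right]
      exact h₂.labelF_apply i (by rw [sizeF_append] at hi; omega)
  · rw [sizeF_append] at hi hj
    rcases split i with hi' | ⟨i, rfl⟩ <;> rcases split j with hj' | ⟨j, rfl⟩
    · simp only [hi', hj', if_true]
      rw [isAncestorF_append_left (h₁.lt_sizeF i hi'), isAncestorF_append_left hi',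
        h₁.isAncestorF_apply i hi' j hj']
    · simp only [hi', if_true, add_lt_iff_neg_left, not_lt_zero, if_false,
        Nat.add_sub_cancel_left]
      rw [isAncestorF_append_left (h₁.lt_sizeF i hi'), isAncestorF_append_left hi']
      exact iff_of_false (fun h => by have := h.lt_sizeF; omega)
        (fun h => by have := h.lt_sizeF; omega)
    · have := h₁.lt_sizeF j hj'
      exact iff_of_false (fun h => by have := h.lt; simp [hj'] at this; omega)
        (fun h => by have := h.lt; omega)
    · simp only [add_lt_iff_neg_left, not_lt_zero, if_false, Nat.add_sub_cancel_left,
        isAncestorF_append_right]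
      exact h₂.isAncestorF_apply i (by omega) j (by omega)

lemma singleton_node (z : X) {cs cs' : List (PTree X)} (h : IsForestEmbedding cs' cs e) :
    IsForestEmbedding [.node z cs'] [.node z cs] (fun i => if i = 0 then 0 else e (i - 1) + 1) := by
  have split : ∀ i, i = 0 ∨ ∃ k, i = k + 1 := fun i => by
    rcases i with _ | k
    · exact .inl rfl
    · exact .inr ⟨k, rfl⟩
  have hsz : ∀ cs : List (PTree X), sizeF [.node z cs] = sizeF cs + 1 := by simp
  refine ⟨fun i j hij => ?_, fun i hi => ?_, fun i hi => ?_, fun i hi j hj => ?_⟩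
  · rcases split i with rfl | ⟨i, rfl⟩ <;> rcases split j with rfl | ⟨j, rfl⟩
    · omega
    · simp
    · omega
    · simpa using h.strictMono (show i < j by omega)
  · rw [hsz] at hi ⊢
    rcases split i with rfl | ⟨i, rfl⟩
    · simp
    · simpa using h.lt_sizeF i (by omega)
  · rw [hsz] at hi
    rcases split i with rfl | ⟨i, rfl⟩
    · simp
    · simpa using h.labelF_apply i (by omega)
  · rw [hsz] at hi hj
    rcases split j with rfl | ⟨j, rfl⟩
    · exact iff_of_false (fun h => by have := h.lt; simp at this)
        (fun h => absurd h.lt (Nat.not_lt_zero _))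
    rcases split i with rfl | ⟨i, rfl⟩
    · simp only [if_true, Nat.add_one_ne_zero, if_false, Nat.add_sub_cancel,
        isAncestorF_node_cons_zero]
      have := h.lt_sizeF j (by omega)
      omega
    · simp only [Nat.add_one_ne_zero, if_false, Nat.add_sub_cancel, isAncestorF_node_cons_succ,
        List.append_nil]
      exact h.isAncestorF_apply i (by omega) j (by omega)

lemma append_left_self (u v : List (PTree X)) : IsForestEmbedding u (u ++ v) id := by
  simpa using ((refl u).append (nil v)).congr (e' := id) fun i => by simp only [id]; split <;> omega

lemma append_right_self (u v : List (PTree X)) :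
    IsForestEmbedding v (u ++ v) (sizeF u + ·) := by
  simpa using ((nil u).append (refl v)).congr (e' := (sizeF u + ·)) fun i => by simp

end IsForestEmbedding

end Embedding

section Mapping

def Compatible (f g : List (PTree X)) (p q : ℕ × ℕ) : Prop :=
  (p.1 = q.1 ↔ p.2 = q.2) ∧ (p.1 < q.1 ↔ p.2 < q.2) ∧
    (IsAncestorF f p.1 q.1 ↔ IsAncestorF g p.2 q.2)

/-- `IsTreeMapping` for forests, with node indices in `ℕ` and explicit bounds. -/
structure IsForestMapping (f g : List (PTree X)) (M : Finset (ℕ × ℕ)) : Prop where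
  fst_lt : ∀ p ∈ M, p.1 < sizeF f
  snd_lt : ∀ p ∈ M, p.2 < sizeF g
  compatible : ∀ p ∈ M, ∀ q ∈ M, Compatible f g p q

namespace IsForestMapping

variable {f g f' g' : List (PTree X)} {M N : Finset (ℕ × ℕ)} {α β : ℕ → ℕ}

lemma mono (hM : IsForestMapping f g M) (hN : N ⊆ M) : IsForestMapping f g N :=
  ⟨fun p hp => hM.fst_lt p (hN hp), fun p hp => hM.snd_lt p (hN hp),
    fun p hp q hq => hM.compatible p (hN hp) q (hN hq)⟩

lemma fst_injOn (hM : IsForestMapping f g M) : Set.InjOn Prod.fst (M : Set (ℕ × ℕ)) :=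
  fun p hp q hq h => Prod.ext h ((hM.compatible p hp q hq).1.mp h)

lemma eq_empty_of_nil_left (hM : IsForestMapping [] g M) : M = ∅ :=
  Finset.eq_empty_of_forall_notMem fun p hp => by simpa using hM.fst_lt p hp

lemma eq_empty_of_nil_right (hM : IsForestMapping f [] M) : M = ∅ :=
  Finset.eq_empty_of_forall_notMem fun p hp => by simpa using hM.snd_lt p hp

lemma of_subtreeSizesF_eq (hM : IsForestMapping f g M) (h : subtreeSizesF f = subtreeSizesF f') :
    IsForestMapping f' g M := by
  have hsz : sizeF f' = sizeF f := by rw [← length_subtreeSizesF, ← length_subtreeSizesF, h]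
  refine ⟨fun p hp => hsz ▸ hM.fst_lt p hp, hM.snd_lt, fun p hp q hq => ?_⟩
  simpa only [Compatible, IsAncestorF, h] using hM.compatible p hp q hq

lemma compatible_prodMap_iff (hα : IsForestEmbedding f' f α) (hβ : IsForestEmbedding g' g β)
    {p q : ℕ × ℕ} (hp : p.1 < sizeF f' ∧ p.2 < sizeF g')
    (hq : q.1 < sizeF f' ∧ q.2 < sizeF g') :
    Compatible f g (Prod.map α β p) (Prod.map α β q) ↔ Compatible f' g' p q := by
  simp only [Compatible, Prod.map_fst, Prod.map_snd, hα.strictMono.injective.eq_iff,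
    hβ.strictMono.injective.eq_iff, hα.strictMono.lt_iff_lt, hβ.strictMono.lt_iff_lt,
    hα.isAncestorF_apply _ hp.1 _ hq.1, hβ.isAncestorF_apply _ hp.2 _ hq.2]

lemma image_prodMap (hα : IsForestEmbedding f' f α) (hβ : IsForestEmbedding g' g β)
    (hM : IsForestMapping f' g' M) : IsForestMapping f g (M.image (Prod.map α β)) := by
  have hlt : ∀ p ∈ M, p.1 < sizeF f' ∧ p.2 < sizeF g' :=
    fun p hp => ⟨hM.fst_lt p hp, hM.snd_lt p hp⟩
  refine ⟨Finset.forall_mem_image.mpr fun p hp => hα.lt_sizeF _ (hlt p hp).1,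
    Finset.forall_mem_image.mpr fun p hp => hβ.lt_sizeF _ (hlt p hp).2,
    Finset.forall_mem_image.mpr fun p hp => Finset.forall_mem_image.mpr fun q hq => ?_⟩
  exact (compatible_prodMap_iff hα hβ (hlt p hp) (hlt q hq)).mpr (hM.compatible p hp q hq)

lemma exists_eq_image_prodMap (hα : IsForestEmbedding f' f α) (hβ : IsForestEmbedding g' g β)
    (hM : IsForestMapping f g M)
    (hsub : ∀ p ∈ M, ∃ i < sizeF f', ∃ j < sizeF g', (α i, β j) = p) :
    ∃ M', IsForestMapping f' g' M' ∧ M = M'.image (Prod.map α β) := by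
  set M' := (Finset.range (sizeF f') ×ˢ Finset.range (sizeF g')).filter (Prod.map α β · ∈ M)
  have hmem : ∀ p,
      p ∈ M' ↔ (p.1 < sizeF f' ∧ p.2 < sizeF g') ∧ Prod.map α β p ∈ M := by
    simp [M']
  refine ⟨M', ⟨fun p hp => ((hmem p).1 hp).1.1, fun p hp => ((hmem p).1 hp).1.2,
    fun p hp q hq => ?_⟩, ?_⟩
  · rw [hmem] at hp hq
    exact (compatible_prodMap_iff hα hβ hp.1 hq.1).mp (hM.compatible _ hp.2 _ hq.2)
  · ext p
    simp only [Finset.mem_image, hmem]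
    constructor
    · intro hp
      obtain ⟨i, hi, j, hj, rfl⟩ := hsub p hp
      exact ⟨(i, j), ⟨⟨hi, hj⟩, hp⟩, rfl⟩
    · rintro ⟨q, ⟨-, hq⟩, rfl⟩
      exact hq

/-- At most one pair of a mapping starts at a given node. -/
lemma sum_filter_fst_eq_le (hM : IsForestMapping f g M) (d : ℕ) {F : ℕ × ℕ → ℝ} {K : ℝ}
    (hK : 0 ≤ K) (hF : ∀ p ∈ M, p.1 = d → F p ≤ K) :
    ∑ p ∈ M with p.1 = d, F p ≤ K := by
  have hcard : (M.filter (·.1 = d)).card ≤ 1 := Finset.card_le_one.mpr fun p hp q hq => by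
    simp only [Finset.mem_filter] at hp hq
    exact hM.fst_injOn hp.1 hq.1 (hp.2.trans hq.2.symm)
  calc ∑ p ∈ M with p.1 = d, F p ≤ (M.filter (·.1 = d)).card • K :=
        Finset.sum_le_card_nsmul _ _ _ fun p hp => by
          simp only [Finset.mem_filter] at hp; exact hF p hp.1 hp.2
    _ ≤ 1 • K := nsmul_le_nsmul_left hK hcard
    _ = K := one_nsmul K

end IsForestMapping

variable (c : Option X → Option X → ℝ)

def delCost (f : List (PTree X)) : ℝ := ((preorderF f).map fun a => c (some a) none).sum

def insCost (g : List (PTree X)) : ℝ := ((preorderF g).map fun b => c none (some b)).sum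

/-- The change in cost when the nodes `p.1` of `f` and `p.2` of `g` are matched instead of
being deleted and inserted; it makes the cost of a mapping additive in the mapping. -/
def matchDelta (f g : List (PTree X)) (p : ℕ × ℕ) : ℝ :=
  c (labelF f p.1) (labelF g p.2) - c (labelF f p.1) none - c none (labelF g p.2)

def forestCost (f g : List (PTree X)) (M : Finset (ℕ × ℕ)) : ℝ :=
  delCost c f + insCost c g + ∑ p ∈ M, matchDelta c f g p

@[simp] lemma delCost_nil : delCost c ([] : List (PTree X)) = 0 := by simp [delCost]

@[simp] lemma delCost_append (u v : List (PTree X)) :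
    delCost c (u ++ v) = delCost c u + delCost c v := by
  simp [delCost]

@[simp] lemma delCost_node_cons (a : X) (cs rest : List (PTree X)) :
    delCost c (.node a cs :: rest) = c (some a) none + delCost c cs + delCost c rest := by
  simp [delCost, add_assoc]

@[simp] lemma insCost_nil : insCost c ([] : List (PTree X)) = 0 := by simp [insCost]

@[simp] lemma insCost_append (u v : List (PTree X)) :
    insCost c (u ++ v) = insCost c u + insCost c v := by
  simp [insCost]

@[simp] lemma insCost_node_cons (b : X) (ds rest : List (PTree X)) :
    insCost c (.node b ds :: rest) = c none (some b) + insCost c ds + insCost c rest := by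
  simp [insCost, add_assoc]

lemma sum_range_sizeF (f : List (PTree X)) (F : Option X → ℝ) :
    ∑ i ∈ Finset.range (sizeF f), F (labelF f i) = ((preorderF f).map (F ∘ some)).sum := by
  rw [← Fin.sum_univ_fun_getElem, ← Fin.sum_univ_eq_sum_range]
  exact Finset.sum_congr rfl fun i _ => by simp [labelF, List.getElem?_eq_getElem i.2]; rfl

lemma sum_matchDelta_image_prodMap {f g f' g' : List (PTree X)} {M : Finset (ℕ × ℕ)}
    {α β : ℕ → ℕ} (hα : IsForestEmbedding f' f α) (hβ : IsForestEmbedding g' g β)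
    (hM : IsForestMapping f' g' M) :
    ∑ p ∈ M.image (Prod.map α β), matchDelta c f g p = ∑ p ∈ M, matchDelta c f' g' p := by
  rw [Finset.sum_image fun p _ q _ h =>
    (hα.strictMono.injective.prodMap hβ.strictMono.injective) h]
  refine Finset.sum_congr rfl fun p hp => ?_
  simp only [matchDelta, Prod.map_fst, Prod.map_snd, hα.labelF_apply _ (hM.fst_lt p hp),
    hβ.labelF_apply _ (hM.snd_lt p hp)]

end Mapping

section Edits

/-- The `i`-th natural number other than `d` (cf. `Fin.succAbove`). -/
def succAbove (d i : ℕ) : ℕ := if i < d then i else i + 1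

lemma exists_succAbove_eq {d k n : ℕ} (hd : d < n + 1) (hk : k ≠ d) (hkn : k < n + 1) :
    ∃ i < n, succAbove d i = k := by
  by_cases h : k < d
  · exact ⟨k, by omega, if_pos h⟩
  · exact ⟨k - 1, by omega, by unfold succAbove; split_ifs <;> omega⟩

variable {f g : List (PTree X)} {l l' : X}

theorem Deletes.exists_isForestEmbedding (h : Deletes f g l) :
    ∃ d, labelF f d = some l ∧ sizeF f = sizeF g + 1 ∧
      IsForestEmbedding g f (succAbove d) := by
  induction h with
  | here l cs rest =>
    refine ⟨0, labelF_node_cons_zero l cs rest, by rw [sizeF_node_cons, sizeF_append], ?_⟩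
    exact (IsForestEmbedding.node_cons l cs rest).congr fun i => by simp [succAbove]
  | @child cs cs' l z rest _ ih =>
    obtain ⟨d, hl, hsz, he⟩ := ih
    have hd := lt_sizeF_of_labelF_eq_some hl
    refine ⟨d + 1, by rw [labelF_node_cons_succ, labelF_append_left hd, hl],
      by rw [sizeF_node_cons, sizeF_node_cons, hsz]; omega,
      ((he.singleton_node z).append (.refl rest)).congr fun i => ?_⟩
    simp only [succAbove, sizeF_node_cons, sizeF_nil, hsz, id]
    split_ifs <;> omega
  | @skip rest rest' l t _ ih =>
    obtain ⟨d, hl, hsz, he⟩ := ih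
    refine ⟨sizeF [t] + d, by rw [← List.singleton_append, labelF_append_right, hl],
      by rw [sizeF_cons, sizeF_cons, hsz, add_assoc],
      ((IsForestEmbedding.refl [t]).append he).congr fun i => ?_⟩
    simp only [succAbove, id]
    split_ifs <;> omega

lemma Deletes.delCost_eq (c : Option X → Option X → ℝ) (h : Deletes f g l) :
    delCost c f = c (some l) none + delCost c g := by
  induction h with
  | here => rw [delCost_node_cons, delCost_append]; ring
  | child _ _ _ ih => rw [delCost_node_cons, delCost_node_cons, ih]; ring
  | @skip rest rest' l t _ ih =>
    show delCost c ([t] ++ rest) = _ + delCost c ([t] ++ rest')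
    rw [delCost_append, delCost_append, ih]; ring

theorem Replaces.exists_set (h : Replaces f g l l') :
    ∃ d, labelF f d = some l ∧ preorderF g = (preorderF f).set d l' ∧
      subtreeSizesF g = subtreeSizesF f := by
  induction h with
  | here l l' cs rest => exact ⟨0, by simp, by simp, by simp⟩
  | @child cs cs' l l' z rest _ ih =>
    obtain ⟨d, hl, hpre, hsub⟩ := ih
    have hd : d < (preorderF cs).length := lt_sizeF_of_labelF_eq_some hl
    have hsz : sizeF cs' = sizeF cs := by simp [sizeF, hpre]
    refine ⟨d + 1, by rw [labelF_node_cons_succ, labelF_append_left hd, hl], ?_,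
      by simp only [subtreeSizesF_node_cons, subtreeSizesF_append, hsub, hsz]⟩
    simp [hpre, List.set_append_left _ _ hd]
  | @skip rest rest' l l' t _ ih =>
    obtain ⟨d, hl, hpre, hsub⟩ := ih
    refine ⟨sizeF [t] + d, by rw [← List.singleton_append, labelF_append_right, hl], ?_,
      by simp [hsub]⟩
    simp [hpre, sizeF, List.set_append_right]

lemma Replaces.delCost_add (c : Option X → Option X → ℝ) (h : Replaces f g l l') :
    delCost c f + c (some l') none = delCost c g + c (some l) none := by
  induction h with
  | here => simp only [delCost_node_cons]; ring
  | child => simp only [delCost_node_cons]; linarith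
  | @skip rest rest' l l' t _ ih =>
    show delCost c ([t] ++ rest) + _ = delCost c ([t] ++ rest') + _
    rw [delCost_append, delCost_append]; linarith

end Edits

section ScriptToMapping

variable (c : Option X → Option X → ℝ) {f g h : List (PTree X)} {M : Finset (ℕ × ℕ)}
  {l l' : X}

lemma IsForestMapping.exists_of_deletes (hd : Deletes f g l) (hM : IsForestMapping g h M) :
    ∃ M', IsForestMapping f h M' ∧
      forestCost c f h M' = c (some l) none + forestCost c g h M := by
  obtain ⟨d, -, -, he⟩ := hd.exists_isForestEmbedding
  refine ⟨_, hM.image_prodMap he (.refl h), ?_⟩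
  rw [forestCost, forestCost, sum_matchDelta_image_prodMap c he (.refl h) hM, hd.delCost_eq c]
  ring

/-- The inserted node is matched to at most one node `b`, and the triangle inequality
`c(−, b) ≤ c(−, l) + c(l, b)` pays for unmatching it. -/
lemma IsForestMapping.exists_of_inserts (hnonneg : ∀ a b, 0 ≤ c a b)
    (htri : ∀ a b e, c a e ≤ c a b + c b e) (hd : Deletes g f l) (hM : IsForestMapping g h M) :
    ∃ M', IsForestMapping f h M' ∧
      forestCost c f h M' ≤ c none (some l) + forestCost c g h M := by
  obtain ⟨d, hl, hsz, he⟩ := hd.exists_isForestEmbedding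
  obtain ⟨M', hM', hM'eq⟩ := (hM.mono (M.filter_subset (¬ ·.1 = d))).exists_eq_image_prodMap
    he (.refl h) fun p hp => by
      rw [Finset.mem_filter] at hp
      obtain ⟨i, hi, hip⟩ := exists_succAbove_eq (hsz ▸ lt_sizeF_of_labelF_eq_some hl) hp.2
        (hsz ▸ hM.fst_lt p hp.1)
      exact ⟨i, hi, p.2, hM.snd_lt p hp.1, by rw [hip]; rfl⟩
  refine ⟨M', hM', ?_⟩
  have hsplit := Finset.sum_filter_add_sum_filter_not M (·.1 = d) (matchDelta c g h)
  have hrest :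
      ∑ p ∈ M with ¬ p.1 = d, matchDelta c g h p = ∑ p ∈ M', matchDelta c f h p := by
    rw [hM'eq, sum_matchDelta_image_prodMap c he (.refl h) hM']
  have hroot :
      ∑ p ∈ M with p.1 = d, -matchDelta c g h p ≤ c none (some l) + c (some l) none :=
    hM.sum_filter_fst_eq_le d (add_nonneg (hnonneg _ _) (hnonneg _ _)) fun p _ hp => by
      simp only [matchDelta, hp, hl]
      linarith [htri none (some l) (labelF h p.2)]
  rw [Finset.sum_neg_distrib] at hroot
  simp only [forestCost, hd.delCost_eq c]
  linarith

lemma IsForestMapping.exists_of_replaces (htri : ∀ a b e, c a e ≤ c a b + c b e)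
    (hr : Replaces f g l l') (hM : IsForestMapping g h M) :
    ∃ M', IsForestMapping f h M' ∧
      forestCost c f h M' ≤ c (some l) (some l') + forestCost c g h M := by
  obtain ⟨d, hl, hpre, hsub⟩ := hr.exists_set
  have hd : d < (preorderF f).length := lt_sizeF_of_labelF_eq_some hl
  have hlabel : ∀ i, labelF g i = if i = d then some l' else labelF f i := fun i => by
    rw [labelF, labelF, hpre]
    split_ifs with hi
    · rw [hi, List.getElem?_set_self hd]
    · exact List.getElem?_set_ne (Ne.symm hi)
  refine ⟨M, hM.of_subtreeSizesF_eq hsub, ?_⟩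
  have hroot : ∑ p ∈ M with p.1 = d, (matchDelta c f h p - matchDelta c g h p) ≤
      c (some l) (some l') - c (some l) none + c (some l') none :=
    hM.sum_filter_fst_eq_le d (by linarith [htri (some l) (some l') none]) fun p _ hp => by
      simp only [matchDelta, hlabel, hp, if_true, hl]
      linarith [htri (some l) (some l') (labelF h p.2)]
  rw [Finset.sum_filter_of_ne fun p _ hne => ?_, Finset.sum_sub_distrib] at hroot
  · simp only [forestCost]
    linarith [hr.delCost_add c]
  · by_contra hpd
    simp [matchDelta, hlabel, hpd] at hne

lemma exists_forestCost_self_eq_zero (hdiag : ∀ a, c a a = 0) (f : List (PTree X)) :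
    ∃ M, IsForestMapping f f M ∧ forestCost c f f M = 0 := by
  refine ⟨(Finset.range (sizeF f)).image fun i => (i, i), ⟨by simp, by simp, ?_⟩, ?_⟩
  · simp [Compatible]
  · rw [forestCost, Finset.sum_image fun i _ j _ h => (Prod.mk.inj h).1]
    simp only [matchDelta, hdiag, sub_eq_add_neg, Finset.sum_neg_distrib,
      Finset.sum_add_distrib, Finset.sum_const_zero, sum_range_sizeF f (c · none),
      sum_range_sizeF f (c none ·)]
    simp only [delCost, insCost, Function.comp_def]
    ring

theorem Script.exists_isForestMapping_le (hc : IsPseudoMetric c) {r : ℝ} (h : Script c f g r) :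
    ∃ M, IsForestMapping f g M ∧ forestCost c f g M ≤ r := by
  obtain ⟨hnonneg, -, hdiag, htri⟩ := hc
  induction h with
  | nil f =>
    obtain ⟨M, hM, hcost⟩ := exists_forestCost_self_eq_zero c hdiag f
    exact ⟨M, hM, hcost.le⟩
  | cons step _ ih =>
    obtain ⟨M, hM, hle⟩ := ih
    cases step with
    | del hd =>
      obtain ⟨M', hM', hcost⟩ := hM.exists_of_deletes c hd
      exact ⟨M', hM', by linarith⟩
    | ins hd =>
      obtain ⟨M', hM', hcost⟩ := hM.exists_of_inserts c hnonneg htri hd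
      exact ⟨M', hM', by linarith⟩
    | rep hr =>
      obtain ⟨M', hM', hcost⟩ := hM.exists_of_replaces c htri hr
      exact ⟨M', hM', by linarith⟩

end ScriptToMapping

section MappingToScript

variable {c : Option X → Option X → ℝ} {f g h cs ds rest rest' : List (PTree X)} {r s : ℝ}

lemma Script.trans (h₁ : Script c f g r) (h₂ : Script c g h s) : Script c f h (r + s) := by
  induction h₁ with
  | nil => simpa using h₂
  | cons step _ ih => rw [add_assoc]; exact .cons step (ih h₂)

lemma Script.snoc (h₁ : Script c f g r) (step : EditStep c g h s) : Script c f h (r + s) := by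
  simpa using h₁.trans (.cons step (.nil h))

lemma EditStep.congr_children (z : X) (rest : List (PTree X)) (h : EditStep c cs ds r) :
    EditStep c (.node z cs :: rest) (.node z ds :: rest) r := by
  cases h with
  | del hd => exact .del (.child z rest hd)
  | ins hd => exact .ins (.child z rest hd)
  | rep hr => exact .rep (.child z rest hr)

lemma EditStep.congr_tail (t : PTree X) (h : EditStep c rest rest' r) :
    EditStep c (t :: rest) (t :: rest') r := by
  cases h with
  | del hd => exact .del (.skip t hd)
  | ins hd => exact .ins (.skip t hd)
  | rep hr => exact .rep (.skip t hr)

lemma Script.congr_children (z : X) (rest : List (PTree X)) (h : Script c cs ds r) :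
    Script c (.node z cs :: rest) (.node z ds :: rest) r := by
  induction h with
  | nil => exact .nil _
  | cons step _ ih => exact .cons (step.congr_children z rest) ih

lemma Script.congr_tail (t : PTree X) (h : Script c rest rest' r) :
    Script c (t :: rest) (t :: rest') r := by
  induction h with
  | nil => exact .nil _
  | cons step _ ih => exact .cons (step.congr_tail t) ih

variable (c) {M : Finset (ℕ × ℕ)}

lemma IsForestMapping.exists_of_root_unmatched_left {a : X} {f' : List (PTree X)}
    (hM : IsForestMapping (.node a cs :: f') g M) (h0 : ∀ p ∈ M, p.1 ≠ 0) :
    ∃ M', IsForestMapping (cs ++ f') g M' ∧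
      forestCost c (.node a cs :: f') g M = c (some a) none + forestCost c (cs ++ f') g M' := by
  obtain ⟨M', hM', rfl⟩ := hM.exists_eq_image_prodMap (.node_cons a cs f') (.refl g)
    fun p hp => by
      have hp1 := hM.fst_lt p hp
      have := h0 p hp
      rw [sizeF_node_cons] at hp1
      exact ⟨p.1 - 1, by rw [sizeF_append]; omega, p.2, hM.snd_lt p hp,
        Prod.ext (Nat.sub_add_cancel (Nat.one_le_iff_ne_zero.mpr (h0 p hp))) rfl⟩
  refine ⟨M', hM', ?_⟩
  rw [forestCost, forestCost, sum_matchDelta_image_prodMap c (.node_cons a cs f') (.refl g) hM']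
  simp only [delCost_node_cons, delCost_append]
  ring

lemma IsForestMapping.exists_of_root_unmatched_right {b : X} {g' : List (PTree X)}
    (hM : IsForestMapping f (.node b ds :: g') M) (h0 : ∀ p ∈ M, p.2 ≠ 0) :
    ∃ M', IsForestMapping f (ds ++ g') M' ∧
      forestCost c f (.node b ds :: g') M = c none (some b) + forestCost c f (ds ++ g') M' := by
  obtain ⟨M', hM', rfl⟩ := hM.exists_eq_image_prodMap (.refl f) (.node_cons b ds g')
    fun p hp => by
      have hp2 := hM.snd_lt p hp
      have := h0 p hp
      rw [sizeF_node_cons] at hp2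
      exact ⟨p.1, hM.fst_lt p hp, p.2 - 1, by rw [sizeF_append]; omega,
        Prod.ext rfl (Nat.sub_add_cancel (Nat.one_le_iff_ne_zero.mpr (h0 p hp)))⟩
  refine ⟨M', hM', ?_⟩
  rw [forestCost, forestCost, sum_matchDelta_image_prodMap c (.refl f) (.node_cons b ds g') hM']
  simp only [insCost_node_cons, insCost_append]
  ring

lemma IsForestMapping.zero_zero_mem (hM : IsForestMapping f g M) {p q : ℕ × ℕ} (hp : p ∈ M)
    (hp0 : p.1 = 0) (hq : q ∈ M) (hq0 : q.2 = 0) : (0, 0) ∈ M := by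
  obtain ⟨heq, hlt, -⟩ := hM.compatible p hp q hq
  have hpq : p.1 = q.1 := by
    by_contra hne
    have := hlt.mp (by omega)
    omega
  have hp' : p = (0, 0) := Prod.ext hp0 ((heq.mp hpq).trans hq0)
  exact hp' ▸ hp

lemma IsForestMapping.exists_split_append {u v u' v' : List (PTree X)}
    (hM : IsForestMapping (u ++ v) (u' ++ v') M)
    (hblock : ∀ p ∈ M, p.1 < sizeF u ↔ p.2 < sizeF u') :
    ∃ M₁ M₂, IsForestMapping u u' M₁ ∧ IsForestMapping v v' M₂ ∧
      ∑ p ∈ M, matchDelta c (u ++ v) (u' ++ v') p =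
        ∑ p ∈ M₁, matchDelta c u u' p + ∑ p ∈ M₂, matchDelta c v v' p := by
  have hl := IsForestEmbedding.append_left_self u v
  have hl' := IsForestEmbedding.append_left_self u' v'
  have hr := IsForestEmbedding.append_right_self u v
  have hr' := IsForestEmbedding.append_right_self u' v'
  obtain ⟨M₁, hM₁, h₁⟩ :=
    (hM.mono (M.filter_subset (·.1 < sizeF u))).exists_eq_image_prodMap hl hl' fun p hp => by
      rw [Finset.mem_filter] at hp
      exact ⟨p.1, hp.2, p.2, (hblock p hp.1).mp hp.2, rfl⟩
  obtain ⟨M₂, hM₂, h₂⟩ :=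
    (hM.mono (M.filter_subset (¬ ·.1 < sizeF u))).exists_eq_image_prodMap hr hr' fun p hp => by
      rw [Finset.mem_filter] at hp
      have h1 := hM.fst_lt p hp.1
      have h2 := hM.snd_lt p hp.1
      have := hblock p hp.1
      rw [sizeF_append] at h1 h2
      exact ⟨p.1 - sizeF u, by omega, p.2 - sizeF u', by omega, by ext <;> simp <;> omega⟩
  refine ⟨M₁, M₂, hM₁, hM₂, ?_⟩
  rw [← Finset.sum_filter_add_sum_filter_not M (·.1 < sizeF u), h₁, h₂,
    sum_matchDelta_image_prodMap c hl hl' hM₁, sum_matchDelta_image_prodMap c hr hr' hM₂]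

lemma IsForestMapping.exists_of_root_matched {a b : X} {f' g' : List (PTree X)}
    (hM : IsForestMapping (.node a cs :: f') (.node b ds :: g') M) (h00 : (0, 0) ∈ M) :
    ∃ M₁ M₂, IsForestMapping cs ds M₁ ∧ IsForestMapping f' g' M₂ ∧
      forestCost c (.node a cs :: f') (.node b ds :: g') M =
        c (some a) (some b) + forestCost c cs ds M₁ + forestCost c f' g' M₂ := by
  obtain ⟨M', hM', hM'eq⟩ := (hM.mono (M.erase_subset (0, 0))).exists_eq_image_prodMap
    (.node_cons a cs f') (.node_cons b ds g') fun p hp => by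
      obtain ⟨hne, hp⟩ := Finset.mem_erase.mp hp
      have h1 := hM.fst_lt p hp
      have h2 := hM.snd_lt p hp
      have hroot := (hM.compatible p hp _ h00).1
      have : p.1 ≠ 0 := fun h => hne (Prod.ext h (hroot.mp h))
      simp only [sizeF_node_cons] at h1 h2
      exact ⟨p.1 - 1, by rw [sizeF_append]; omega, p.2 - 1, by rw [sizeF_append]; omega,
        by ext <;> simp <;> omega⟩
  have hblock : ∀ p ∈ M', p.1 < sizeF cs ↔ p.2 < sizeF ds := fun p hp => by
    have hp' : (p.1 + 1, p.2 + 1) ∈ M :=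
      Finset.mem_of_mem_erase (hM'eq ▸ Finset.mem_image_of_mem (Prod.map _ _) hp)
    have := (hM.compatible _ h00 _ hp').2.2
    simp only [isAncestorF_node_cons_zero] at this
    omega
  obtain ⟨M₁, M₂, hM₁, hM₂, hsum⟩ := hM'.exists_split_append c hblock
  refine ⟨M₁, M₂, hM₁, hM₂, ?_⟩
  rw [forestCost, ← Finset.add_sum_erase M _ h00, hM'eq,
    sum_matchDelta_image_prodMap c (.node_cons a cs f') (.node_cons b ds g') hM', hsum]
  simp only [forestCost, matchDelta, labelF_node_cons_zero, delCost_node_cons, insCost_node_cons]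
  ring

theorem IsForestMapping.script_forestCost (hM : IsForestMapping f g M) :
    Script c f g (forestCost c f g M) := by
  induction hn : sizeF f + sizeF g using Nat.strong_induction_on generalizing f g M with
  | _ n ih =>
  by_cases hdel : ∃ a cs f', f = .node a cs :: f' ∧ ∀ p ∈ M, p.1 ≠ 0
  · obtain ⟨a, cs, f', rfl, h0⟩ := hdel
    obtain ⟨M', hM', hcost⟩ := hM.exists_of_root_unmatched_left c h0
    rw [hcost]
    rw [sizeF_node_cons] at hn
    exact .cons (.del (.here a cs f')) (ih _ (by rw [sizeF_append]; omega) hM' rfl)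
  by_cases hins : ∃ b ds g', g = .node b ds :: g' ∧ ∀ p ∈ M, p.2 ≠ 0
  · obtain ⟨b, ds, g', rfl, h0⟩ := hins
    obtain ⟨M', hM', hcost⟩ := hM.exists_of_root_unmatched_right c h0
    rw [hcost, add_comm]
    rw [sizeF_node_cons] at hn
    exact (ih _ (by rw [sizeF_append]; omega) hM' rfl).snoc (.ins (.here b ds g'))
  push Not at hdel hins
  rcases f with _ | ⟨⟨a, cs⟩, f'⟩ <;> rcases g with _ | ⟨⟨b, ds⟩, g'⟩
  · rw [hM.eq_empty_of_nil_left]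
    simpa [forestCost] using Script.nil (c := c) []
  · obtain ⟨p, hp, -⟩ := hins b ds g' rfl
    simp [hM.eq_empty_of_nil_left] at hp
  · obtain ⟨p, hp, -⟩ := hdel a cs f' rfl
    simp [hM.eq_empty_of_nil_right] at hp
  · obtain ⟨p, hp, hp0⟩ := hdel a cs f' rfl
    obtain ⟨q, hq, hq0⟩ := hins b ds g' rfl
    obtain ⟨M₁, M₂, hM₁, hM₂, hcost⟩ :=
      hM.exists_of_root_matched c (hM.zero_zero_mem hp hp0 hq hq0)
    simp only [sizeF_node_cons] at hn
    rw [hcost, add_assoc]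
    exact .cons (.rep (.here a b cs f'))
      (((ih _ (by omega) hM₁ rfl).congr_children b f').trans
        ((ih _ (by omega) hM₂ rfl).congr_tail _))

end MappingToScript

section Tree

variable {x y : PTree X}

lemma labelF_singleton (t : PTree X) (i : Fin (size t)) : labelF [t] i = some (label t i) := by
  simp [labelF, label, List.getElem?_eq_getElem i.2]
  rfl

lemma isAncestorF_singleton (t : PTree X) (i j : ℕ) :
    IsAncestorF [t] i j ↔ IsAncestor t i j := by
  simp [IsAncestorF, IsAncestor]

lemma isTreeMapping_iff {M : Finset (Fin (size x) × Fin (size y))} :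
    IsTreeMapping x y M ↔ IsForestMapping [x] [y] (M.image (Prod.map Fin.val Fin.val)) := by
  have hcompat : ∀ p q : Fin (size x) × Fin (size y),
      Compatible [x] [y] (Prod.map Fin.val Fin.val p) (Prod.map Fin.val Fin.val q) ↔
        ((p.1 = q.1 ↔ p.2 = q.2) ∧ (p.1 < q.1 ↔ p.2 < q.2) ∧
          (IsAncestor x p.1 q.1 ↔ IsAncestor y p.2 q.2)) := fun p q => by
    simp [Compatible, isAncestorF_singleton, Fin.val_inj]
  constructor
  · intro hM
    refine ⟨?_, ?_, ?_⟩ <;> simp only [Finset.forall_mem_image]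
    · exact fun p _ => by simp
    · exact fun p _ => by simp
    · exact fun p hp q hq => (hcompat p q).mpr (hM p hp q hq)
  · intro hM p hp q hq
    exact (hcompat p q).mp (hM.compatible _ (Finset.mem_image_of_mem _ hp) _
      (Finset.mem_image_of_mem _ hq))

lemma exists_image_eq_of_isForestMapping {N : Finset (ℕ × ℕ)}
    (hN : IsForestMapping [x] [y] N) :
    ∃ M : Finset (Fin (size x) × Fin (size y)), M.image (Prod.map Fin.val Fin.val) = N := by
  refine ⟨Finset.univ.filter (Prod.map Fin.val Fin.val · ∈ N), ?_⟩
  ext p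
  simp only [Finset.mem_image, Finset.mem_filter, Finset.mem_univ, true_and]
  refine ⟨fun ⟨q, hq, hqp⟩ => hqp ▸ hq, fun hp => ?_⟩
  have h1 := hN.fst_lt p hp
  have h2 := hN.snd_lt p hp
  simp only [sizeF_cons, sizeF_nil, add_zero] at h1 h2
  exact ⟨(⟨p.1, h1⟩, ⟨p.2, h2⟩), hp, rfl⟩

lemma sum_filter_forall_ne {ι κ : Type*} [Fintype ι] (s : Finset κ) {π : κ → ι}
    [DecidablePred fun i => ∀ p ∈ s, π p ≠ i] (hπ : Set.InjOn π s) (F : ι → ℝ) :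
    ∑ i ∈ Finset.univ.filter (fun i => ∀ p ∈ s, π p ≠ i), F i =
      ∑ i, F i - ∑ p ∈ s, F (π p) := by
  classical
  have hmissed : Finset.univ.filter (fun i => ¬ ∀ p ∈ s, π p ≠ i) = s.image π := by
    ext i; simp
  rw [eq_sub_iff_add_eq, ← Finset.sum_image hπ, ← hmissed,
    Finset.sum_filter_add_sum_filter_not]

lemma mappingCost_eq_forestCost (c : Option X → Option X → ℝ)
    {M : Finset (Fin (size x) × Fin (size y))} (hM : IsTreeMapping x y M) :
    mappingCost c x y M = forestCost c [x] [y] (M.image (Prod.map Fin.val Fin.val)) := by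
  have hfst : Set.InjOn Prod.fst (M : Set _) := fun p hp q hq h =>
    Prod.ext h (((hM p hp q hq).1).mp h)
  have hsnd : Set.InjOn Prod.snd (M : Set _) := fun p hp q hq h =>
    Prod.ext (((hM p hp q hq).1).mpr h) h
  have hdel : delCost c [x] = ∑ i, c (some (label x i)) none := by
    simp only [delCost, preorderF_cons, preorderF_nil, List.append_nil]
    rw [← Fin.sum_univ_fun_getElem]
    rfl
  have hins : insCost c [y] = ∑ j, c none (some (label y j)) := by
    simp only [insCost, preorderF_cons, preorderF_nil, List.append_nil]
    rw [← Fin.sum_univ_fun_getElem]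
    rfl
  rw [mappingCost, forestCost, sum_filter_forall_ne M (π := Prod.fst) hfst,
    sum_filter_forall_ne M (π := Prod.snd) hsnd,
    Finset.sum_image (Fin.val_injective.prodMap Fin.val_injective).injOn, hdel, hins]
  simp only [matchDelta, Prod.map_fst, Prod.map_snd, labelF_singleton, Finset.sum_sub_distrib]
  ring

lemma mapDist_eq_sInf_forestCost (c : Option X → Option X → ℝ) (x y : PTree X) :
    mapDist c x y =
      sInf {r | ∃ N, IsForestMapping [x] [y] N ∧ forestCost c [x] [y] N = r} := by
  rw [mapDist]
  congr 1
  ext r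
  constructor
  · rintro ⟨M, hM, rfl⟩
    exact ⟨_, isTreeMapping_iff.mp hM, (mappingCost_eq_forestCost c hM).symm⟩
  · rintro ⟨N, hN, rfl⟩
    obtain ⟨M, rfl⟩ := exists_image_eq_of_isForestMapping hN
    have hM := isTreeMapping_iff.mpr hN
    exact ⟨M, hM, mappingCost_eq_forestCost c hM⟩

end Tree

end PTree

/-- Let `c` be a pseudo-metric on `X ∪ {−}`, where `X` is a
finite alphabet. Then for all trees `x̄`, `ȳ` over `X`, the mapping distance
`D_c(x̄, ȳ)` (the quantity computed by the dynamic programming scheme of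
Zhang and Shasha) equals the tree edit distance `d_c(x̄, ȳ)`. -/
theorem mapDist_eq_editDist (X : Type) [Fintype X]
    (c : Option X → Option X → ℝ) (hc : IsPseudoMetric c) (x y : PTree X) :
    PTree.mapDist c x y = PTree.editDist c x y := by
  rw [PTree.mapDist_eq_sInf_forestCost, PTree.editDist]
  apply csInf_eq_csInf_of_forall_exists_le
  · rintro _ ⟨M, hM, rfl⟩
    exact ⟨_, hM.script_forestCost c, le_rfl⟩
  · intro r hr
    obtain ⟨M, hM, hle⟩ := hr.exists_isForestMapping_le c hc
    exact ⟨_, ⟨M, hM, rfl⟩, hle⟩
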